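/- Let C be a monoidal category with coequalizers preserved by the tensor product in each variable, let R be a quasi-unital algebra object in C, and let M be a left R-module object. If the augmented simplicial bar object ⋯ ⇛ R ⊗ R ⊗ M ⇉ R ⊗ M → M admits an extra degeneracy (contracting homotopy in the simplicial sense), then the canonical map R ⊗_R M → M is an isomorphism, i.e., M is a smooth R-module. -/

import Mathlib

/-!
The extra degeneracy `s, t` exhibits the action `R ⊗ M ⟶ M` as a split coequalizer of the two
face maps `R ⊗ R ⊗ M ⇉ R ⊗ M`, and a split coequalizer is a coequalizer, so the comparison map
from `R ⊗_R M` is an isomorphism.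
-/

open CategoryTheory CategoryTheory.Limits MonoidalCategory

/- In `IsSplitCoequalizer f g π` the left section splits `g`, hence the order `g, f` below. -/
theorem CategoryTheory.IsSplitCoequalizer.isIso_of_coequalizer_π_comp {C : Type*} [Category C]
    {X Y Z : C} {f g : X ⟶ Y} [HasCoequalizer g f] {π : Y ⟶ Z}
    (hπ : IsSplitCoequalizer f g π) {h : coequalizer g f ⟶ Z} (hh : coequalizer.π g f ≫ h = π) :
    IsIso h := by
  refine ⟨⟨hπ.rightSection ≫ coequalizer.π g f, ?_, by rw [Category.assoc, hh, hπ.rightSection_π]⟩⟩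
  apply coequalizer.hom_ext
  rw [Category.comp_id, reassoc_of% hh, ← reassoc_of% hπ.leftSection_top,
    ← coequalizer.condition, reassoc_of% hπ.leftSection_bottom]

theorem smooth_of_extra_degeneracy
    {C : Type*} [Category C] [MonoidalCategory C] [HasCoequalizers C]
    [∀ X : C, PreservesColimitsOfShape WalkingParallelPair (tensorLeft X)]
    [∀ X : C, PreservesColimitsOfShape WalkingParallelPair (tensorRight X)]
    (R M : C) (μ : R ⊗ R ⟶ R) (act : R ⊗ M ⟶ M)
    -- associativity of multiplication and of the action
    (hμ : (α_ R R R).hom ≫ (R ◁ μ) ≫ μ = (μ ▷ R) ≫ μ)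
    (hact : (α_ R R M).hom ≫ (R ◁ act) ≫ act = (μ ▷ M) ≫ act)
    -- `R` is quasi-unital: the canonical map `R ⊗_R R → R` is an isomorphism
    (hQU : ∃ (w : ((α_ R R R).inv ≫ (μ ▷ R)) ≫ μ = (R ◁ μ) ≫ μ),
      IsIso (coequalizer.desc μ w))
    -- extra degeneracy of the augmented bar object, in low simplicial degrees
    (s : M ⟶ R ⊗ M) (t : R ⊗ M ⟶ R ⊗ (R ⊗ M))
    (hs : s ≫ act = 𝟙 M)
    (ht₀ : t ≫ ((α_ R R M).inv ≫ (μ ▷ M)) = 𝟙 (R ⊗ M))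
    (ht₁ : t ≫ (R ◁ act) = act ≫ s) :
    ∀ (w : ((α_ R R M).inv ≫ (μ ▷ M)) ≫ act = (R ◁ act) ≫ act)
      (h : coequalizer ((α_ R R M).inv ≫ (μ ▷ M)) (R ◁ act) ⟶ M),
      coequalizer.π _ _ ≫ h = act → IsIso h :=
  fun w _ hh => IsSplitCoequalizer.isIso_of_coequalizer_π_comp ⟨s, t, w.symm, hs, ht₀, ht₁⟩ hh
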